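/- Fix integers k ≥ 2 and U ≥ 1, and let φ_k be the unique real root greater than 1 of P_k(x) = x^k − x^{k−1} − ⋯ − x − 1. Then there exists a constant c > 0 such that the upper bound on the stream diffusion metric, N̄(t) = ∑_{j=1}^{U} S_k(t−j+1), satisfies N̄(t) − c·φ_k^t → −U/(k−1) as the integer t → ∞; that is, N̄(t) has the asymptotic closed form N̄(t) ≈ c·φ_k^t − U/(k−1). -/

import Mathlib

/-- Value of the k-step Fibonacci sequence at natural indices. -/
def FkNat (k : ℕ) : ℕ → ℕ
  | 0 => 0
  | 1 => 1
  | n + 2 => ∑ j ∈ Finset.range k, FkNat k (n + 1 - j)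
decreasing_by omega

/-- The k-step Fibonacci sequence `F_k : ℤ → ℕ`:
`F_k i = 0` for `i ≤ 0`, `F_k 1 = 1`, and `F_k i = ∑_{j=1}^{k} F_k (i - j)` for `i > 1`. -/
def Fk (k : ℕ) (i : ℤ) : ℕ := if i ≤ 0 then 0 else FkNat k i.toNat

/-- The k-step Fibonacci sum `S_k n = ∑_{i=1}^{n} F_k i` (zero for `n ≤ 0`). -/
noncomputable def Sk (k : ℕ) (n : ℤ) : ℕ := ∑ i ∈ Finset.Icc (1 : ℤ) n, Fk k i

open Filter

/-!
Shifted by `U / (k - 1)`, the bound `N̄` satisfies the homogeneous `k`-step recurrence, i.e. it is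
annihilated by `P_k` evaluated at the shift operator on sequences. A complex root `z` of `P_k` with
`‖z‖ ≥ 1` satisfies `z ^ k * (2 - z) = 1` and `‖z‖ ^ k * (2 - ‖z‖) ≥ 1`, which forces `z` to be a
positive real, hence `φ_k`; and `φ_k` is a simple root. So `P_k = (X - φ_k) * Q` with coprime
factors and all roots of `Q` in the open unit disc: the kernel of `P_k(shift)` is the sum of the
geometric sequences `c * φ_k ^ t` and of sequences tending to `0`. Since `N̄` is unbounded, `c > 0`.
-/

open Finset Polynomial Topology

section Combinatorics

variable {k : ℕ}

lemma Fk_of_nonpos {i : ℤ} (hi : i ≤ 0) : Fk k i = 0 := if_pos hi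

lemma Fk_natCast (m : ℕ) : Fk k m = FkNat k m := by
  rcases m with _ | m
  · simp [Fk, FkNat]
  · simp [Fk]

lemma Fk_add {n : ℤ} (hn : 2 ≤ n + k) : Fk k (n + k) = ∑ i ∈ range k, Fk k (n + i) := by
  obtain ⟨m, hm⟩ : ∃ m : ℕ, n + k = m + 2 := ⟨(n + k - 2).toNat, by omega⟩
  rw [hm, show (m : ℤ) + 2 = (m + 2 : ℕ) by push_cast; ring, Fk_natCast, FkNat,
    ← sum_range_reflect]
  refine sum_congr rfl fun j hj => ?_
  rw [mem_range] at hj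
  rcases le_or_gt (k - 1 - j) (m + 1) with hjm | hjm
  · rw [show n + (j : ℤ) = (m + 1 - (k - 1 - j) : ℕ) by omega, Fk_natCast]
  · rw [Fk_of_nonpos (by omega), Nat.sub_eq_zero_of_le hjm.le, FkNat]

lemma Fk_pos (hk : 1 ≤ k) {i : ℤ} (hi : 1 ≤ i) : 0 < Fk k i := by
  induction i, hi using Int.leInduction with
  | base => simp [Fk, FkNat]
  | succ i hi ih =>
    rw [← sub_add_cancel (i + 1) (k : ℤ), Fk_add (by omega)]
    refine lt_of_lt_of_le ?_ (single_le_sum (fun _ _ => Nat.zero_le _)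
      (mem_range.2 (Nat.sub_lt hk one_pos)))
    rwa [show i + 1 - k + ((k - 1 : ℕ) : ℤ) = i by omega]

lemma Sk_of_nonpos {n : ℤ} (hn : n ≤ 0) : Sk k n = 0 := by
  rw [Sk, Icc_eq_empty (by omega), sum_empty]

lemma Sk_add_one (n : ℤ) : Sk k (n + 1) = Sk k n + Fk k (n + 1) := by
  rcases le_or_gt 0 n with hn | hn
  · rw [Sk, ← insert_Icc_right_eq_Icc_add_one (by omega), sum_insert (by simp), Sk, add_comm]
  · rw [Sk_of_nonpos (by omega), Sk_of_nonpos hn.le, Fk_of_nonpos (by omega)]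

lemma Sk_add {n : ℤ} (hn : 1 ≤ n + k) : Sk k (n + k) = 1 + ∑ i ∈ range k, Sk k (n + i) := by
  replace hn : 1 - (k : ℤ) ≤ n := by omega
  induction n, hn using Int.leInduction with
  | base =>
    rw [sub_add_cancel, sum_eq_zero fun i hi => Sk_of_nonpos (by simp at hi; omega)]
    simp [Sk, Fk, FkNat]
  | succ n hn ih =>
    rw [add_right_comm, Sk_add_one, ih, add_right_comm n, Fk_add (by omega), add_assoc,
      ← sum_add_distrib]
    congr 2 with i
    rw [add_right_comm, Sk_add_one, add_right_comm]

lemma le_Sk (hk : 1 ≤ k) (n : ℕ) : n ≤ Sk k n := by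
  calc n = ∑ _i ∈ Icc (1 : ℤ) n, 1 := by simp
    _ ≤ Sk k n := sum_le_sum fun i hi => Fk_pos hk (mem_Icc.1 hi).1

end Combinatorics

noncomputable def diffusionBound (k U t : ℕ) : ℕ := ∑ j ∈ Icc 1 U, Sk k ((t : ℤ) - (j : ℤ) + 1)

lemma diffusionBound_add {k U t : ℕ} (ht : U ≤ t + k) :
    diffusionBound k U (t + k) = U + ∑ i ∈ range k, diffusionBound k U (t + i) := by
  simp only [diffusionBound]
  calc ∑ j ∈ Icc 1 U, Sk k (((t + k : ℕ) : ℤ) - j + 1)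
      = ∑ j ∈ Icc 1 U, (1 + ∑ i ∈ range k, Sk k (((t + i : ℕ) : ℤ) - j + 1)) := by
        refine sum_congr rfl fun j hj => ?_
        rw [mem_Icc] at hj
        rw [show ((t + k : ℕ) : ℤ) - j + 1 = (t - j + 1) + k by push_cast; ring,
          Sk_add (by omega)]
        congr 2 with i
        congr 1
        push_cast
        ring
    _ = U + ∑ i ∈ range k, ∑ j ∈ Icc 1 U, Sk k (((t + i : ℕ) : ℤ) - j + 1) := by
        rw [sum_add_distrib, sum_comm]
        simp

lemma le_diffusionBound {k U : ℕ} (hk : 1 ≤ k) (hU : 1 ≤ U) (t : ℕ) : t ≤ diffusionBound k U t :=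
  calc t ≤ Sk k t := le_Sk hk t
    _ = Sk k ((t : ℤ) - ((1 : ℕ) : ℤ) + 1) := by simp
    _ ≤ diffusionBound k U t :=
      single_le_sum (f := fun j : ℕ => Sk k ((t : ℤ) - j + 1)) (fun _ _ => Nat.zero_le _)
        (mem_Icc.2 ⟨le_rfl, hU⟩)

section Shift

variable (R M : Type*) [CommRing R] [AddCommGroup M] [Module R M]

def seqShift : Module.End R (ℕ → M) := LinearMap.funLeft R M Nat.succ

variable {R M}

lemma seqShift_apply (u : ℕ → M) (n : ℕ) : seqShift R M u n = u (n + 1) := rfl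

lemma seqShift_pow_apply (i : ℕ) (u : ℕ → M) (n : ℕ) : (seqShift R M ^ i) u n = u (n + i) := by
  induction i generalizing n with
  | zero => rfl
  | succ i ih => rw [pow_succ', Module.End.mul_apply, seqShift_apply, ih, add_right_comm, add_assoc]

lemma aeval_seqShift_C (a : R) (u : ℕ → M) : aeval (seqShift R M) (C a) u = a • u := by
  rw [aeval_C, Module.algebraMap_end_apply]

lemma aeval_seqShift_X_sub_C_apply (z : R) (u : ℕ → M) (n : ℕ) :
    aeval (seqShift R M) (X - C z) u n = u (n + 1) - z • u n := by
  simp [seqShift_apply]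

lemma eq_pow_smul_of_aeval_seqShift_X_sub_C {z : R} {u : ℕ → M}
    (hu : aeval (seqShift R M) (X - C z) u = 0) (n : ℕ) : u n = z ^ n • u 0 := by
  induction n with
  | zero => simp
  | succ n ih =>
    have h := congrFun hu n
    rw [aeval_seqShift_X_sub_C_apply, Pi.zero_apply, sub_eq_zero] at h
    rw [h, ih, smul_smul, pow_succ']

end Shift

section Decay

variable {𝕜 E : Type*} [NormedField 𝕜] [SeminormedAddCommGroup E] [NormedSpace 𝕜 E]

lemma tendsto_zero_of_tendsto_sub_smul {z : 𝕜} (hz : ‖z‖ < 1) {u : ℕ → E}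
    (hu : Tendsto (fun n => u (n + 1) - z • u n) atTop (𝓝 0)) : Tendsto u atTop (𝓝 0) := by
  refine Metric.tendsto_atTop.2 fun ε hε => ?_
  obtain ⟨N, hN⟩ := Metric.tendsto_atTop.1 hu (ε / 2 * (1 - ‖z‖)) (by nlinarith)
  set a : ℕ → ℝ := fun m => ‖u (N + m)‖ - ε / 2
  have hstep : ∀ m, a (m + 1) ≤ ‖z‖ * a m := fun m => by
    have hv := hN (N + m) (by omega)
    rw [dist_zero_right] at hv
    have hsplit : u (N + (m + 1)) = z • u (N + m) + (u (N + m + 1) - z • u (N + m)) := by abel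
    calc a (m + 1) ≤ ‖z‖ * ‖u (N + m)‖ + ε / 2 * (1 - ‖z‖) - ε / 2 := by
          simp only [a]
          rw [hsplit, ← norm_smul]
          linarith [norm_add_le (z • u (N + m)) (u (N + m + 1) - z • u (N + m))]
      _ = ‖z‖ * a m := by ring
  have hgeom : Tendsto (fun m => ‖z‖ ^ m * a 0) atTop (𝓝 0) := by
    simpa using (tendsto_pow_atTop_nhds_zero_of_lt_one (norm_nonneg z) hz).mul_const (a 0)
  obtain ⟨M, hM⟩ := eventually_atTop.1 (hgeom.eventually (gt_mem_nhds (half_pos hε)))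
  refine ⟨N + M, fun n hn => ?_⟩
  obtain ⟨m, rfl⟩ := Nat.exists_eq_add_of_le (le_trans (Nat.le_add_right N M) hn)
  have hsmall := (le_geom (norm_nonneg z) m fun i _ => hstep i).trans_lt (hM m (by omega))
  rw [dist_zero_right]
  simp only [a] at hsmall
  linarith

variable [IsAlgClosed 𝕜]

theorem tendsto_zero_of_aeval_seqShift_eq_zero {q : 𝕜[X]} (hq : q ≠ 0)
    (hroots : ∀ z, q.IsRoot z → ‖z‖ < 1) {u : ℕ → E} (hu : aeval (seqShift 𝕜 E) q u = 0) :
    Tendsto u atTop (𝓝 0) := by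
  induction hd : q.natDegree generalizing q u with
  | zero =>
    rw [eq_C_of_natDegree_eq_zero hd, aeval_seqShift_C, smul_eq_zero] at hu
    rcases hu with h | rfl
    · exact absurd (eq_C_of_natDegree_eq_zero hd) (by simpa [h] using hq)
    · exact tendsto_const_nhds
  | succ d ih =>
    obtain ⟨z, hz⟩ := IsAlgClosed.exists_root q <| by
      rw [degree_eq_natDegree hq, hd]
      exact_mod_cast d.succ_ne_zero
    set q₁ := q /ₘ (X - C z)
    have hq₁ : (X - C z) * q₁ = q := mul_divByMonic_eq_iff_isRoot.2 hz
    have hq₁0 : q₁ ≠ 0 := right_ne_zero_of_mul (hq₁ ▸ hq)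
    refine tendsto_zero_of_tendsto_sub_smul (hroots z hz) ?_
    simp_rw [← aeval_seqShift_X_sub_C_apply]
    refine ih hq₁0 (fun w hw => hroots w ?_) ?_ ?_
    · rw [← hq₁, IsRoot.def, eval_mul, hw.eq_zero, mul_zero]
    · rw [← Module.End.mul_apply, ← aeval_mul, mul_comm, hq₁, hu]
    · rw [← hq₁, natDegree_mul (X_sub_C_ne_zero z) hq₁0, natDegree_X_sub_C] at hd; omega

theorem exists_tendsto_sub_pow_smul_of_aeval_seqShift_eq_zero {z : 𝕜} {q : 𝕜[X]}
    (hqz : ¬ q.IsRoot z) (hroots : ∀ w, q.IsRoot w → ‖w‖ < 1) {u : ℕ → E}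
    (hu : aeval (seqShift 𝕜 E) ((X - C z) * q) u = 0) :
    ∃ c : E, Tendsto (fun n => u n - z ^ n • c) atTop (𝓝 0) := by
  have hcop : IsCoprime (X - C z) q :=
    (irreducible_X_sub_C z).coprime_iff_not_dvd.2 (by rwa [dvd_iff_isRoot])
  rw [← LinearMap.mem_ker, ← sup_ker_aeval_eq_ker_aeval_mul_of_coprime _ hcop,
    Submodule.mem_sup] at hu
  obtain ⟨e, he, f, hf, rfl⟩ := hu
  refine ⟨e 0, ?_⟩
  simp_rw [Pi.add_apply, ← eq_pow_smul_of_aeval_seqShift_X_sub_C he, add_sub_cancel_left]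
  exact tendsto_zero_of_aeval_seqShift_eq_zero (by rintro rfl; simp at hqz) hroots hf

end Decay

lemma pos_of_tendsto_sub_mul {α : Type*} {l : Filter α} [l.NeBot] {a g : α → ℝ} {c : ℝ}
    (ha : Tendsto a l atTop) (hg : ∀ x, 0 ≤ g x) (h : Tendsto (fun x => a x - c * g x) l (𝓝 0)) :
    0 < c := by
  by_contra! hc
  refine not_tendsto_nhds_of_tendsto_atTop (tendsto_atTop_mono (fun x => ?_) ha) 0 h
  nlinarith [hg x]

noncomputable def kbonacciPoly (R : Type*) [CommRing R] (k : ℕ) : R[X] :=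
  X ^ k - ∑ j ∈ range k, X ^ j

section KbonacciPoly

variable {k : ℕ}

@[simp]
lemma eval_kbonacciPoly {R : Type*} [CommRing R] (x : R) :
    (kbonacciPoly R k).eval x = x ^ k - ∑ j ∈ range k, x ^ j := by
  simp [kbonacciPoly]

lemma map_kbonacciPoly {R S : Type*} [CommRing R] [CommRing S] (f : R →+* S) :
    (kbonacciPoly R k).map f = kbonacciPoly S k := by
  simp [kbonacciPoly, Polynomial.map_sum]

lemma aeval_seqShift_kbonacciPoly_apply {R M : Type*} [CommRing R] [AddCommGroup M] [Module R M]
    (u : ℕ → M) (n : ℕ) :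
    aeval (seqShift R M) (kbonacciPoly R k) u n = u (n + k) - ∑ i ∈ range k, u (n + i) := by
  simp [kbonacciPoly, seqShift_pow_apply]

lemma norm_lt_one_or_of_isRoot_kbonacciPoly (hk : 2 ≤ k) {z : ℂ}
    (hz : (kbonacciPoly ℂ k).IsRoot z) :
    ‖z‖ < 1 ∨ ∃ x : ℝ, 1 < x ∧ (kbonacciPoly ℝ k).IsRoot x ∧ z = x := by
  refine or_iff_not_imp_left.2 fun hr => ?_
  rw [not_lt] at hr
  have hzk : z ^ k = ∑ j ∈ range k, z ^ j := by simpa [sub_eq_zero] using hz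
  have hsum : ‖z‖ ^ k ≤ ∑ j ∈ range k, ‖z‖ ^ j := by
    simpa [← norm_pow, ← hzk] using norm_sum_le (range k) (z ^ ·)
  have hgeom : (∑ j ∈ range k, ‖z‖ ^ j) * (‖z‖ - 1) = ‖z‖ ^ k - 1 := geom_sum_mul _ _
  have h2z : z ^ k * (2 - z) = 1 := by linear_combination -(geom_sum_mul z k) - (z - 1) * hzk
  have hnorm : ‖2 - z‖ ≤ 2 - ‖z‖ := by
    refine le_of_mul_le_mul_left ?_ (pow_pos (one_pos.trans_le hr) k)
    rw [show ‖z‖ ^ k * ‖2 - z‖ = 1 by rw [← norm_pow, ← norm_mul, h2z, norm_one]]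
    nlinarith [mul_nonneg (sub_nonneg.2 hr) (sub_nonneg.2 hsum)]
  have hre : z.re = ‖z‖ := by
    refine le_antisymm (Complex.re_le_norm z) ?_
    linarith [Complex.re_le_norm (2 - z), Complex.sub_re 2 z, Complex.re_ofNat 2]
  have hz_real : z = ‖z‖ :=
    Complex.ext (by simp [hre]) (by simp [Complex.abs_re_eq_norm.1 (by rw [hre, abs_norm])])
  refine ⟨‖z‖, lt_of_le_of_ne hr fun h1 => ?_, ?_, hz_real⟩
  · rw [← h1, Complex.ofReal_one] at hz_real
    rw [hz_real] at hzk
    norm_num at hzk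
    norm_cast at hzk
    omega
  · rw [hz_real] at hzk
    rw [IsRoot.def, eval_kbonacciPoly, sub_eq_zero]
    exact_mod_cast hzk

lemma eval_derivative_kbonacciPoly_pos {φ : ℝ} (hφ : 0 < φ)
    (hroot : (kbonacciPoly ℝ k).IsRoot φ) : 0 < (derivative (kbonacciPoly ℝ k)).eval φ := by
  have hsum : ∑ j ∈ range k, φ ^ j = φ ^ k := by simpa [sub_eq_zero, eq_comm] using hroot
  have hmul : ∀ n : ℕ, φ * (n * φ ^ (n - 1)) = n * φ ^ n := by
    rintro (_ | n)
    · simp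
    · simp only [Nat.add_sub_cancel, pow_succ]; ring
  have hle : ∑ j ∈ range k, (j : ℝ) * φ ^ j ≤ (k - 1) * φ ^ k := by
    rw [← hsum, mul_sum]
    refine sum_le_sum fun j hj => mul_le_mul_of_nonneg_right ?_ (by positivity)
    have := mem_range.1 hj
    rw [le_sub_iff_add_le]
    exact_mod_cast this
  have hderiv : φ * (derivative (kbonacciPoly ℝ k)).eval φ =
      k * φ ^ k - ∑ j ∈ range k, (j : ℝ) * φ ^ j := by
    simp [kbonacciPoly, derivative_X_pow, eval_finsetSum, mul_sub, mul_sum, hmul]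
  refine pos_of_mul_pos_right (a := φ) ?_ hφ.le
  rw [hderiv]
  nlinarith [pow_pos hφ k]

end KbonacciPoly

theorem exists_tendsto_sub_mul_pow_of_kbonacci {k : ℕ} (hk : 2 ≤ k) {φ : ℝ} (hφ : 0 < φ)
    (hroot : (kbonacciPoly ℝ k).IsRoot φ)
    (huniq : ∀ x : ℝ, 1 < x → (kbonacciPoly ℝ k).IsRoot x → x = φ) {b : ℕ → ℝ}
    (hb : ∀ᶠ n in atTop, b (n + k) = ∑ i ∈ range k, b (n + i)) :
    ∃ c : ℝ, Tendsto (fun n => b n - c * φ ^ n) atTop (𝓝 0) := by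
  set P := kbonacciPoly ℂ k
  have hmap : (kbonacciPoly ℝ k).map Complex.ofRealHom = P := map_kbonacciPoly _
  have hPφ : P.IsRoot φ := by
    simp only [P, IsRoot.def, eval_kbonacciPoly] at hroot ⊢
    exact_mod_cast hroot
  set Q := P /ₘ (X - C (φ : ℂ))
  have hPQ : (X - C (φ : ℂ)) * Q = P := mul_divByMonic_eq_iff_isRoot.2 hPφ
  have hQφ : ¬ Q.IsRoot φ := by
    intro hQ
    have hder : (derivative P).eval (φ : ℂ) = Q.eval (φ : ℂ) := by
      rw [← hPQ]; simp [derivative_mul]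
    have hder' : (((derivative (kbonacciPoly ℝ k)).eval φ : ℝ) : ℂ) = 0 := by
      rw [← hQ.eq_zero, ← hder, ← hmap, derivative_map, eval_map]
      exact (eval₂_at_apply Complex.ofRealHom φ).symm
    exact (eval_derivative_kbonacciPoly_pos hφ hroot).ne'
      (Complex.ofReal_eq_zero.1 hder')
  have hQroots : ∀ w, Q.IsRoot w → ‖w‖ < 1 := by
    intro w hw
    have hPw : P.IsRoot w := by rw [← hPQ, IsRoot.def, eval_mul, hw.eq_zero, mul_zero]
    rcases norm_lt_one_or_of_isRoot_kbonacciPoly hk hPw with h | ⟨x, hx1, hx, rfl⟩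
    · exact h
    · exact absurd (huniq x hx1 hx ▸ hw) hQφ
  obtain ⟨N, hN⟩ := eventually_atTop.1 hb
  have hu : aeval (seqShift ℂ ℂ) ((X - C (φ : ℂ)) * Q) (fun n => (b (n + N) : ℂ)) = 0 := by
    funext n
    rw [hPQ, aeval_seqShift_kbonacciPoly_apply, Pi.zero_apply, sub_eq_zero]
    simp only [add_right_comm _ _ N]
    exact_mod_cast hN (n + N) (by omega)
  obtain ⟨c, hc⟩ := exists_tendsto_sub_pow_smul_of_aeval_seqShift_eq_zero hQφ hQroots hu
  refine ⟨c.re / φ ^ N, (tendsto_add_atTop_iff_nat N).1 ?_⟩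
  convert (Complex.continuous_re.tendsto 0).comp hc using 2 with n
  · have hφ0 : φ ≠ 0 := hφ.ne'
    simp [← Complex.ofReal_pow, pow_add]
    field_simp
  · simp

/-- Asymptotic closed form for the upper bound on the stream diffusion metric:
if `φ_k` is the unique real root greater than 1 of `P_k(x) = x^k - x^(k-1) - ⋯ - x - 1`,
then there is a constant `c > 0` such that
`N̄(t) = ∑_{j=1}^{U} S_k (t - j + 1)` satisfies `N̄(t) - c φ_k^t → -U/(k-1)`
as `t → ∞`; that is, `N̄(t) ≈ c φ_k^t - U/(k-1)`. -/
theorem stream_diffusion_bound_asymptotics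
    (k U : ℕ) (hk : 2 ≤ k) (hU : 1 ≤ U) (φ : ℝ) (hφ : 1 < φ)
    (hroot : φ ^ k - ∑ j ∈ Finset.range k, φ ^ j = 0)
    (huniq : ∀ x : ℝ, 1 < x → x ^ k - ∑ j ∈ Finset.range k, x ^ j = 0 → x = φ) :
    ∃ c : ℝ, 0 < c ∧
      Tendsto
        (fun t : ℕ => ((∑ j ∈ Finset.Icc 1 U, Sk k ((t : ℤ) - (j : ℤ) + 1) : ℕ) : ℝ)
          - c * φ ^ t)
        atTop (nhds (-(U : ℝ) / ((k : ℝ) - 1))) := by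
  have hk1 : (k : ℝ) - 1 ≠ 0 := sub_ne_zero.2 (by norm_cast; omega)
  set β : ℝ := U / (k - 1) with hβ
  set b : ℕ → ℝ := fun t => diffusionBound k U t + β
  have hb : ∀ᶠ t in atTop, b (t + k) = ∑ i ∈ range k, b (t + i) := by
    filter_upwards [eventually_ge_atTop U] with t ht
    simp only [b, diffusionBound_add (by omega : U ≤ t + k), sum_add_distrib, sum_const,
      card_range, nsmul_eq_mul]
    push_cast
    rw [hβ]
    field_simp
    ring
  obtain ⟨c, hc⟩ := exists_tendsto_sub_mul_pow_of_kbonacci hk (by linarith) (by simpa using hroot)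
    (fun x hx h => huniq x hx (by simpa using h)) hb
  have hb_top : Tendsto b atTop atTop := tendsto_atTop_add_const_right _ _ <|
    tendsto_atTop_mono (fun t => Nat.cast_le.2 (le_diffusionBound (by omega) hU t))
      tendsto_natCast_atTop_atTop
  refine ⟨c, pos_of_tendsto_sub_mul hb_top (fun t => by positivity) hc, ?_⟩
  have hlim := hc.sub_const β
  rw [zero_sub, hβ, ← neg_div] at hlim
  refine hlim.congr fun t => ?_
  simp only [b, diffusionBound]
  push_cast
  ring
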